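/- arXiv:1309.6097 — 5 statements merged into one kernel-verified Lean document; each statement's English description precedes it below -/
import Mathlib

section
/- Let $G$ be a group admitting a bi-invariant mean (i.e., a linear functional $m : \ell^\infty(G) \to \mathbb{R}$ with $m(\chi_G)=1$, $m(\varphi)\ge 0$ whenever $\varphi \ge 0$, and $m$ invariant under both left and right translations), and let $H \le G$ be a subgroup of infinite index. Then for any pair of finite subsets $T, T' \subseteq G$ there exists $g \in G$ such that the images of $T\cdot g$ and $T'$ under the canonical projection $G \to H\backslash G$ are disjoint; equivalently, $T g \cap H T' = \emptyset$ when translated into cosets, i.e., $g \notin T^{-1} H T'$. -/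
/-- The space `ℓ∞(G)` of bounded real-valued functions on `G`, as a submodule of `G → ℝ`. -/
def Linf (G : Type*) : Submodule ℝ (G → ℝ) where
  carrier := {f | ∃ C : ℝ, ∀ x, |f x| ≤ C}
  add_mem' := by
    rintro f g ⟨C, hC⟩ ⟨D, hD⟩
    exact ⟨C + D, fun x => by
      simpa using (abs_add_le (f x) (g x)).trans (add_le_add (hC x) (hD x))⟩
  zero_mem' := ⟨0, fun x => by simp⟩
  smul_mem' := by
    rintro c f ⟨C, hC⟩
    exact ⟨|c| * C, fun x => by
      simpa [abs_mul] using mul_le_mul_of_nonneg_left (hC x) (abs_nonneg c)⟩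

open Classical in
/-- The characteristic function of a set, as an element of `ℓ∞`. -/
noncomputable def chi {G : Type*} (A : Set G) : Linf G :=
  ⟨fun x => if x ∈ A then 1 else 0, ⟨1, fun x => by by_cases h : x ∈ A <;> simp [h]⟩⟩

/-- Left translation action on `ℓ∞(G)`: `(g • φ)(x) = φ(g⁻¹ x)`. -/
def lT {G : Type*} [Group G] (g : G) (φ : Linf G) : Linf G :=
  ⟨fun x => (φ : G → ℝ) (g⁻¹ * x), by obtain ⟨C, hC⟩ := φ.2; exact ⟨C, fun x => hC _⟩⟩

/-- Right translation action on `ℓ∞(G)`: `(φ • g)(x) = φ(x g)`. -/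
def rT {G : Type*} [Group G] (g : G) (φ : Linf G) : Linf G :=
  ⟨fun x => (φ : G → ℝ) (x * g), by obtain ⟨C, hC⟩ := φ.2; exact ⟨C, fun x => hC _⟩⟩

/-- A mean on `G`: a normalized positive linear functional on `ℓ∞(G)`. -/
structure Mean (G : Type*) where
  toFun : Linf G →ₗ[ℝ] ℝ
  normalized : toFun (chi Set.univ) = 1
  pos : ∀ φ : Linf G, (∀ x, 0 ≤ (φ : G → ℝ) x) → 0 ≤ toFun φ

/-- A mean is left invariant if it is invariant under left translations. -/
def Mean.LeftInvariant {G : Type*} [Group G] (m : Mean G) : Prop :=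
  ∀ (g : G) (φ : Linf G), m.toFun (lT g φ) = m.toFun φ

/-- A mean is right invariant if it is invariant under right translations. -/
def Mean.RightInvariant {G : Type*} [Group G] (m : Mean G) : Prop :=
  ∀ (g : G) (φ : Linf G), m.toFun (rT g φ) = m.toFun φ

/-!
Right invariance gives all right cosets of `H` the same mean, and since infinitely many of them
are pairwise disjoint inside `G`, whose mean is `1`, that common mean is `0`. By left invariance
the sets `t⁻¹ H t' = {g | H t g = H t'}` are then null as well, and finitely many null sets
cannot cover `G`; any `g` outside all of them for `t ∈ T`, `t' ∈ T'` works.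
-/

open Function QuotientGroup

theorem chi_coe_eq_indicator {G : Type*} (A : Set G) : (chi A : G → ℝ) = A.indicator 1 := by
  classical
  ext x
  simp [chi, Set.indicator_apply]

theorem rT_chi {G : Type*} [Group G] (g : G) (A : Set G) :
    rT g (chi A) = chi ((· * g) ⁻¹' A) := by
  ext x
  simp only [rT, chi_coe_eq_indicator]
  exact (Set.indicator_comp_right _).symm

theorem lT_chi {G : Type*} [Group G] (g : G) (A : Set G) :
    lT g (chi A) = chi ((g⁻¹ * ·) ⁻¹' A) := by
  ext x
  simp only [lT, chi_coe_eq_indicator]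
  exact (Set.indicator_comp_right _).symm

namespace Mean

variable {G : Type*} (m : Mean G)

theorem mono {φ ψ : Linf G} (h : ∀ x, (φ : G → ℝ) x ≤ (ψ : G → ℝ) x) :
    m.toFun φ ≤ m.toFun ψ := by
  have := m.pos (ψ - φ) fun x => by simpa using h x
  rwa [map_sub, sub_nonneg] at this

theorem map_chi_nonneg (A : Set G) : 0 ≤ m.toFun (chi A) :=
  m.pos _ fun x => by rw [chi_coe_eq_indicator]; exact Set.indicator_nonneg (by simp) x

theorem sum_map_chi_le_one {ι : Type*} (s : Finset ι) (A : ι → Set G)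
    (hA : (s : Set ι).PairwiseDisjoint A) : ∑ i ∈ s, m.toFun (chi (A i)) ≤ 1 := by
  rw [← map_sum, ← m.normalized]
  refine m.mono fun x => ?_
  simp only [Submodule.coe_sum, Finset.sum_apply, chi_coe_eq_indicator]
  rw [← congrFun (Finset.indicator_biUnion s A hA) x]
  exact Set.indicator_le_indicator_of_subset (Set.subset_univ _) (by simp) x

theorem map_chi_eq_zero_of_pairwise_disjoint {ι : Type*} [Infinite ι] (A : ι → Set G)
    (hA : Pairwise (Disjoint on A)) (hc : ∀ i j, m.toFun (chi (A i)) = m.toFun (chi (A j)))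
    (i : ι) : m.toFun (chi (A i)) = 0 := by
  refine le_antisymm (le_of_forall_pos_lt_add fun ε hε => ?_) (m.map_chi_nonneg _)
  obtain ⟨n, hn⟩ := exists_nat_gt (1 / ε)
  obtain ⟨s, rfl⟩ := Infinite.exists_subset_card_eq ι n
  have hsum := m.sum_map_chi_le_one s A (hA.set_pairwise _)
  simp only [hc _ i, Finset.sum_const, nsmul_eq_mul] at hsum
  rw [div_lt_iff₀ hε] at hn
  nlinarith

theorem exists_forall_notMem_of_map_chi_eq_zero {ι : Type*} (s : Finset ι) (A : ι → Set G)
    (hA : ∀ i ∈ s, m.toFun (chi (A i)) = 0) : ∃ g, ∀ i ∈ s, g ∉ A i := by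
  by_contra! hcover
  have h1 : m.toFun (chi Set.univ) ≤ ∑ i ∈ s, m.toFun (chi (A i)) := by
    rw [← map_sum]
    refine m.mono fun x => ?_
    obtain ⟨i, hi, hx⟩ := hcover x
    simp only [Submodule.coe_sum, Finset.sum_apply, chi_coe_eq_indicator]
    calc Set.univ.indicator 1 x = (A i).indicator (1 : G → ℝ) x := by simp [hx]
      _ ≤ _ := Finset.single_le_sum (f := fun i => (A i).indicator (1 : G → ℝ) x)
          (fun j _ => Set.indicator_nonneg (by simp) x) hi
  rw [m.normalized, Finset.sum_eq_zero hA] at h1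
  exact one_ne_zero (le_antisymm h1 zero_le_one)

variable [Group G]

theorem LeftInvariant.map_chi_preimage_mul_left {m : Mean G} (hm : m.LeftInvariant) (g : G)
    (A : Set G) : m.toFun (chi ((g * ·) ⁻¹' A)) = m.toFun (chi A) := by
  simpa [lT_chi] using hm g⁻¹ (chi A)

theorem RightInvariant.map_chi_preimage_mul_right {m : Mean G} (hm : m.RightInvariant) (g : G)
    (A : Set G) : m.toFun (chi ((· * g) ⁻¹' A)) = m.toFun (chi A) := by
  simpa [rT_chi] using hm g (chi A)

end Mean

theorem rightRel_fiber_eq_preimage_mul_right {G : Type*} [Group G] (H : Subgroup G) (a : G) :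
    Quotient.mk (rightRel H) ⁻¹' {Quotient.mk _ a} =
      (· * a⁻¹) ⁻¹' (Quotient.mk (rightRel H) ⁻¹' {Quotient.mk _ 1}) := by
  ext x
  simp [Quotient.eq, rightRel_apply]

theorem Mean.RightInvariant.map_chi_rightRel_fiber_eq_zero {G : Type*} [Group G] {m : Mean G}
    (hm : m.RightInvariant) (H : Subgroup G) [Infinite (Quotient (rightRel H))]
    (q : Quotient (rightRel H)) : m.toFun (chi (Quotient.mk (rightRel H) ⁻¹' {q})) = 0 := by
  have hfiber : ∀ q : Quotient (rightRel H), m.toFun (chi (Quotient.mk (rightRel H) ⁻¹' {q})) =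
      m.toFun (chi (Quotient.mk (rightRel H) ⁻¹' {Quotient.mk _ 1})) :=
    Quotient.ind fun a => by
      rw [rightRel_fiber_eq_preimage_mul_right, hm.map_chi_preimage_mul_right]
  exact m.map_chi_eq_zero_of_pairwise_disjoint _
    (fun q q' hne => Disjoint.preimage _ (Set.disjoint_singleton.2 hne))
    (fun q q' => (hfiber q).trans (hfiber q').symm) q

/-- If `G` admits a bi-invariant mean and `H ≤ G` has infinite index
(the space of right cosets `H\G` is infinite), then for any pair of finite subsets
`T, T' ⊆ G` there is `g ∈ G` such that the images of `T·g` and `T'` in `H\G` are disjoint. -/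
theorem separation_lemma {G : Type*} [Group G] (m : Mean G)
    (hml : m.LeftInvariant) (hmr : m.RightInvariant)
    (H : Subgroup G) (hH : Infinite (Quotient (QuotientGroup.rightRel H)))
    (T T' : Set G) (hT : T.Finite) (hT' : T'.Finite) :
    ∃ g : G, ∀ t ∈ T, ∀ t' ∈ T',
      (Quotient.mk (QuotientGroup.rightRel H) (t * g) :
        Quotient (QuotientGroup.rightRel H)) ≠
      Quotient.mk (QuotientGroup.rightRel H) t' := by
  obtain ⟨g, hg⟩ := m.exists_forall_notMem_of_map_chi_eq_zero (hT.toFinset ×ˢ hT'.toFinset)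
    (fun p => (p.1 * ·) ⁻¹' (Quotient.mk (rightRel H) ⁻¹' {Quotient.mk _ p.2})) fun p _ => by
      rw [hml.map_chi_preimage_mul_left, hmr.map_chi_rightRel_fiber_eq_zero]
  exact ⟨g, fun t ht t' ht' => hg (t, t') (by simp [ht, ht'])⟩
end

section
/- Let $G$ be a finitely generated group with word metric $d$, let $G$ be amenable with a F\o lner sequence $S = (S_j)_{j\in\mathbb{N}}$, and let $c \in \ell^\infty(G)$. For $n \in \mathbb{N}$ set $\beta_c^S(n) = |\sum_{s\in S_n} c(s)|/|S_n|$ and $\sigma_S(n) = |\partial_1 S_n|/|S_n|$, where $\partial_r(A) = \{g \in G : 0 < d(g,A) \le r\}$. If $\lim_{n\to\infty} \sigma_S(n)/\beta_c^S(n) = 0$ (with $\beta_c^S(n) > 0$ eventually), then there do NOT exist constants $C, r \in \mathbb{N}_{>0}$ such that $|\sum_{s\in F} c(s)| \le C\cdot|\partial_r F|$ for all finite $F \subseteq G$. (By Whyte's criterion, this means $[c] \neq 0$ in $H_0^{uf}(G;\mathbb{R})$.) -/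
/-! Whyte's inequality on the Følner sets gives `|∑_{S n} c| ≤ C |∂_r (S n)|`. Following a
geodesic from `A` to a point of `∂_r A`, the first step out of `A` lands in `∂₁ A`, and the rest
of the path has length `≤ r`; hence `∂_r A ⊆ ∂₁ A · B_r(e)` and `|∂_r A| ≤ |B_r(e)| |∂₁ A|`.
Dividing by `|S n|` yields `β n ≤ C |B_r(e)| σ n`, so `σ n / β n ≥ 1 / (C |B_r(e)|)` whenever
`β n > 0`, which is incompatible with `σ / β → 0`. -/

/-- The word distance on a group `G` with respect to a generating set `Sg`:
`d(g,h)` is the minimal length of a word in `Sg ∪ Sg⁻¹` representing `g⁻¹h`. -/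
noncomputable def wordDist {G : Type*} [Group G] (Sg : Set G) (g h : G) : ℕ :=
  sInf {n | ∃ w : List G, w.length = n ∧ (∀ x ∈ w, x ∈ Sg ∨ x⁻¹ ∈ Sg) ∧ w.prod = g⁻¹ * h}

/-- The closed ball of radius `r` around `g` in the word metric. -/
noncomputable def wball {G : Type*} [Group G] (Sg : Set G) (g : G) (r : ℕ) : Set G :=
  {x | wordDist Sg g x ≤ r}

/-- The `r`-boundary `∂_r A = {g : 0 < d(g, A) ≤ r}` of a set `A`. -/
noncomputable def rBoundary {G : Type*} [Group G] (Sg : Set G) (r : ℕ) (A : Set G) : Set G :=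
  {g | g ∉ A ∧ ∃ a ∈ A, wordDist Sg a g ≤ r}

/-- A Følner sequence: a sequence of nonempty finite subsets whose `r`-boundaries are
asymptotically negligible for every `r > 0`. -/
def IsFolner {G : Type*} [Group G] (Sg : Set G) (S : ℕ → Finset G) : Prop :=
  (∀ j, (S j).Nonempty) ∧ ∀ r : ℕ, 0 < r →
    Filter.Tendsto (fun j => ((rBoundary Sg r (S j : Set G)).ncard : ℝ) / (S j).card)
      Filter.atTop (nhds 0)

/-- `c : G → ℝ` is a boundary in the degree-zero uniformly finite chain complex: there is
a bounded `1`-chain `b : G² → ℝ`, supported on pairs of uniformly bounded distance, with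
`∂₁ b = c`, where `∂₁ b (x) = ∑_y b(y,x) - ∑_y b(x,y)`. -/
noncomputable def IsUFBoundary {G : Type*} [Group G] (Sg : Set G) (c : G → ℝ) : Prop :=
  ∃ b : G × G → ℝ,
    (∃ C : ℝ, ∀ p, |b p| ≤ C) ∧
    (∃ R : ℕ, ∀ p : G × G, R < wordDist Sg p.1 p.2 → b p = 0) ∧
    ∀ x : G, c x = (∑ᶠ y, b (y, x)) - (∑ᶠ y, b (x, y))

open Filter Topology Pointwise

lemma not_tendsto_div_nhds_zero_of_le_mul {α : Type*} {l : Filter α} [l.NeBot]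
    {β σ : α → ℝ} {M : ℝ} (hM : 0 < M) (hpos : ∀ᶠ n in l, 0 < β n)
    (hle : ∀ᶠ n in l, β n ≤ M * σ n) :
    ¬ Tendsto (fun n => σ n / β n) l (𝓝 0) := by
  intro h
  have : M⁻¹ ≤ 0 := ge_of_tendsto h <| (hpos.and hle).mono fun n ⟨hβ, hβσ⟩ => by
    rw [le_div_iff₀ hβ]
    exact (inv_mul_le_iff₀ hM).2 hβσ
  exact (inv_pos.2 hM).not_ge this

section WordMetric

variable {G : Type*} [Group G] {Sg : Set G}

lemma wordDist_le_of_word {g h : G} {n : ℕ} (w : List G) (hlen : w.length ≤ n)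
    (hw : ∀ x ∈ w, x ∈ Sg ∨ x⁻¹ ∈ Sg) (hprod : w.prod = g⁻¹ * h) :
    wordDist Sg g h ≤ n := by
  refine (Nat.sInf_le ?_).trans hlen
  exact ⟨w, rfl, hw, hprod⟩

lemma exists_word_of_wordDist (hgen : Subgroup.closure Sg = ⊤) (g h : G) :
    ∃ w : List G, w.length = wordDist Sg g h ∧ (∀ x ∈ w, x ∈ Sg ∨ x⁻¹ ∈ Sg) ∧
      w.prod = g⁻¹ * h := by
  have hm : g⁻¹ * h ∈ (Subgroup.closure Sg).toSubmonoid := by simp [hgen]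
  rw [Subgroup.closure_toSubmonoid] at hm
  obtain ⟨w, hw, hprod⟩ := Submonoid.exists_list_of_mem_closure hm
  exact Nat.sInf_mem (s := {n | ∃ w : List G, w.length = n ∧
    (∀ x ∈ w, x ∈ Sg ∨ x⁻¹ ∈ Sg) ∧ w.prod = g⁻¹ * h})
    ⟨w.length, w, rfl, fun x hx => (hw x hx).imp_right Set.mem_inv.mp, hprod⟩

lemma mem_wball_one_inv_mul {g h : G} {r : ℕ} :
    g⁻¹ * h ∈ wball Sg 1 r ↔ wordDist Sg g h ≤ r := by
  simp only [wball, wordDist, Set.mem_ofPred_eq, inv_one, one_mul]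

lemma one_mem_wball (r : ℕ) : (1 : G) ∈ wball Sg 1 r :=
  wordDist_le_of_word [] (Nat.zero_le r) (by simp) (by simp)

lemma finite_wball_one (hSg : Sg.Finite) (hgen : Subgroup.closure Sg = ⊤) (r : ℕ) :
    (wball Sg 1 r).Finite := by
  have : Finite ↥(Sg ∪ Sg⁻¹) := (hSg.union hSg.inv).to_subtype
  refine ((List.finite_length_le _ r).image
    fun l : List ↥(Sg ∪ Sg⁻¹) => (l.map (↑)).prod).subset ?_
  intro x hx
  obtain ⟨w, hlen, hw, hprod⟩ := exists_word_of_wordDist hgen 1 x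
  lift w to List ↥(Sg ∪ Sg⁻¹) using hw
  have hx : wordDist Sg 1 x ≤ r := hx
  rw [← hlen, List.length_map] at hx
  exact ⟨w, hx, by simpa using hprod⟩

lemma rBoundary_subset_mul_wball (r : ℕ) (A : Set G) :
    rBoundary Sg r A ⊆ A * wball Sg 1 r := by
  rintro g ⟨-, a, ha, hd⟩
  exact ⟨a, ha, a⁻¹ * g, mem_wball_one_inv_mul.mpr hd, mul_inv_cancel_left a g⟩

lemma exists_mem_rBoundary_one_of_word {A : Set G} (w : List G)
    (hw : ∀ x ∈ w, x ∈ Sg ∨ x⁻¹ ∈ Sg) {a : G} (ha : a ∈ A) (hout : a * w.prod ∉ A) :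
    ∃ x ∈ rBoundary Sg 1 A, ∃ u : List G, u.length < w.length ∧
      (∀ y ∈ u, y ∈ Sg ∨ y⁻¹ ∈ Sg) ∧ x * u.prod = a * w.prod := by
  -- the first letter of `w` that leads out of `A` crosses `∂₁ A`
  induction w generalizing a with
  | nil => simp [ha] at hout
  | cons s t ih =>
    have hs := hw s List.mem_cons_self
    have ht := fun y hy => hw y (List.mem_cons_of_mem s hy)
    rw [List.prod_cons, ← mul_assoc] at hout ⊢
    by_cases has : a * s ∈ A
    · obtain ⟨x, hx, u, hlen, hu, hxu⟩ := ih ht has hout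
      exact ⟨x, hx, u, by simp; omega, hu, hxu⟩
    · have hstep : wordDist Sg a (a * s) ≤ 1 :=
        wordDist_le_of_word [s] le_rfl (by simpa using hs) (by simp)
      exact ⟨a * s, ⟨has, a, ha, hstep⟩, t, by simp, ht, rfl⟩

lemma rBoundary_subset_rBoundary_one_mul_wball (hgen : Subgroup.closure Sg = ⊤) (r : ℕ)
    (A : Set G) : rBoundary Sg r A ⊆ rBoundary Sg 1 A * wball Sg 1 r := by
  rintro g ⟨hg, a, ha, hd⟩
  obtain ⟨w, hlen, hw, hprod⟩ := exists_word_of_wordDist hgen a g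
  have hwg : a * w.prod = g := by rw [hprod, mul_inv_cancel_left]
  obtain ⟨x, hx, u, hulen, hu, hxu⟩ := exists_mem_rBoundary_one_of_word w hw ha (hwg ▸ hg)
  refine ⟨x, hx, x⁻¹ * g, mem_wball_one_inv_mul.mpr (wordDist_le_of_word u (by omega) hu ?_),
    mul_inv_cancel_left x g⟩
  rw [← hwg, ← hxu, inv_mul_cancel_left]

theorem ncard_rBoundary_le (hSg : Sg.Finite) (hgen : Subgroup.closure Sg = ⊤) {A : Set G}
    (hA : A.Finite) (r : ℕ) :
    (rBoundary Sg r A).ncard ≤ (rBoundary Sg 1 A).ncard * (wball Sg 1 r).ncard := by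
  have hball := finite_wball_one hSg hgen
  have hfin : (rBoundary Sg 1 A).Finite :=
    (hA.mul (hball 1)).subset (rBoundary_subset_mul_wball 1 A)
  calc (rBoundary Sg r A).ncard ≤ (rBoundary Sg 1 A * wball Sg 1 r).ncard :=
        Set.ncard_le_ncard (rBoundary_subset_rBoundary_one_mul_wball hgen r A)
          (hfin.mul (hball r))
    _ ≤ _ := Set.natCard_mul_le

end WordMetric

theorem nonvanishing_of_dominating_folner_ratio_general {G : Type*} [Group G]
    (Sg : Finset G) (hgen : Subgroup.closure (Sg : Set G) = ⊤)
    (S : ℕ → Finset G)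
    (c : G → ℝ)
    (β : ℕ → ℝ) (hβ : ∀ n, β n = |∑ s ∈ S n, c s| / (S n).card)
    (σ : ℕ → ℝ)
    (hσ : ∀ n, σ n = ((rBoundary (Sg : Set G) 1 (S n : Set G)).ncard : ℝ) / (S n).card)
    (hpos : ∀ᶠ n in Filter.atTop, 0 < β n)
    (hdom : Filter.Tendsto (fun n => σ n / β n) Filter.atTop (nhds 0)) :
    ¬ ∃ C r : ℕ, 0 < C ∧ 0 < r ∧ ∀ F : Finset G,
        |∑ s ∈ F, c s| ≤ (C : ℝ) * ((rBoundary (Sg : Set G) r (F : Set G)).ncard : ℝ) := by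
  rintro ⟨C, r, hC, -, hbound⟩
  set K := (wball (Sg : Set G) 1 r).ncard
  have hK : 0 < K :=
    (Set.ncard_pos (finite_wball_one Sg.finite_toSet hgen r)).2 ⟨1, one_mem_wball r⟩
  refine not_tendsto_div_nhds_zero_of_le_mul (M := C * K) (by positivity) hpos
    (.of_forall fun n => ?_) hdom
  have hcount : ((rBoundary (Sg : Set G) r (S n)).ncard : ℝ) ≤
      (rBoundary (Sg : Set G) 1 (S n)).ncard * K := by
    exact_mod_cast ncard_rBoundary_le Sg.finite_toSet hgen (S n).finite_toSet r
  rw [hβ, hσ, mul_div_assoc']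
  refine div_le_div_of_nonneg_right ?_ (Nat.cast_nonneg _)
  calc |∑ s ∈ S n, c s| ≤ C * (rBoundary (Sg : Set G) r (S n)).ncard := hbound (S n)
    _ ≤ C * K * (rBoundary (Sg : Set G) 1 (S n)).ncard := by
      rw [mul_assoc, mul_comm (K : ℝ)]; gcongr

/-- Let `G` be a finitely generated amenable group with Følner sequence
`S`, and `c ∈ ℓ∞(G)`. If `σ_S(n)/β_c^S(n) → 0` (with `β_c^S` eventually positive), then
Whyte's boundedness condition fails for `c`; by Whyte's criterion, `[c] ≠ 0` in
`H₀^{uf}(G;ℝ)`. -/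
theorem nonvanishing_of_dominating_folner_ratio {G : Type*} [Group G]
    (Sg : Finset G) (hgen : Subgroup.closure (Sg : Set G) = ⊤)
    (S : ℕ → Finset G) (hS : IsFolner (Sg : Set G) S)
    (c : G → ℝ) (hc : ∃ C : ℝ, ∀ g, |c g| ≤ C)
    (β : ℕ → ℝ) (hβ : ∀ n, β n = |∑ s ∈ S n, c s| / (S n).card)
    (σ : ℕ → ℝ)
    (hσ : ∀ n, σ n = ((rBoundary (Sg : Set G) 1 (S n : Set G)).ncard : ℝ) / (S n).card)
    (hpos : ∀ᶠ n in Filter.atTop, 0 < β n)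
    (hdom : Filter.Tendsto (fun n => σ n / β n) Filter.atTop (nhds 0)) :
    ¬ ∃ C r : ℕ, 0 < C ∧ 0 < r ∧ ∀ F : Finset G,
        |∑ s ∈ F, c s| ≤ (C : ℝ) * ((rBoundary (Sg : Set G) r (F : Set G)).ncard : ℝ) :=
  nonvanishing_of_dominating_folner_ratio_general Sg hgen S c β hβ σ hσ hpos hdom
end

section
/- Let $G$ be a finitely generated group with word metric and let $c \in \ell^\infty(G)$ satisfy the negation of Whyte's boundedness condition: for every $C, r \in \mathbb{N}_{>0}$ there exists a finite set $F \subseteq G$ with $|\sum_{s\in F} c(s)| > C \cdot |\partial_r F|$. Then there exists a F\o lner sequence $(S'_n)_{n\in\mathbb{N}}$ in $G$ such that $\lim_{n\to\infty} \frac{|\partial_1 S'_n|}{|\sum_{s\in S'_n} c(s)|} = 0$; in particular $\lim_{n\to\infty} \frac{|\partial_1 S'_n|}{|S'_n|} = 0$ while $\frac{|\sum_{s\in S'_n} c(s)|}{|S'_n|}$ dominates it. -/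
/-!
Failure of Whyte's condition with constant `n + 1` and radius `n + 1` yields finite sets `F n`
with `(n + 1) |∂_{n+1} F n| < |∑_{F n} c|`. Since `|∑_{F n} c| ≤ ‖c‖_∞ |F n|` and the
`r`-boundary grows with `r`, both `|∂_r F n| / |F n|` (for `n + 1 ≥ r`) and
`|∂_1 F n| / |∑_{F n} c|` are `O(1 / (n + 1))`.
-/

open Filter Topology

lemma List.finite_setOf_length_le_of_forall_mem {α : Type*} {T : Set α} (hT : T.Finite) (r : ℕ) :
    {w : List α | w.length ≤ r ∧ ∀ x ∈ w, x ∈ T}.Finite := by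
  have := hT.to_subtype
  refine ((List.finite_length_le T r).image (List.map Subtype.val)).subset ?_
  rintro w ⟨hlen, hw⟩
  refine ⟨w.attach.map fun x => ⟨x.1, hw x.1 x.2⟩, by simpa using hlen, ?_⟩
  simp

section WordMetric

variable {G : Type*} [Group G]

lemma exists_list_prod_eq_of_closure_eq_top {S : Set G} (hgen : Subgroup.closure S = ⊤) (g : G) :
    ∃ w : List G, (∀ x ∈ w, x ∈ S ∨ x⁻¹ ∈ S) ∧ w.prod = g := by
  have hg : g ∈ Submonoid.closure (S ∪ S⁻¹) := by
    rw [← Subgroup.closure_toSubmonoid, hgen]; trivial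
  obtain ⟨w, hw, hprod⟩ := Submonoid.exists_list_of_mem_closure hg
  exact ⟨w, fun x hx => (hw x hx).imp id Set.mem_inv.mp, hprod⟩

lemma exists_list_length_eq_wordDist {S : Set G} (hgen : Subgroup.closure S = ⊤) (g h : G) :
    ∃ w : List G, w.length = wordDist S g h ∧ (∀ x ∈ w, x ∈ S ∨ x⁻¹ ∈ S) ∧ w.prod = g⁻¹ * h := by
  obtain ⟨w, hw, hprod⟩ := exists_list_prod_eq_of_closure_eq_top hgen (g⁻¹ * h)
  exact Nat.sInf_mem (s := {n | ∃ w : List G, w.length = n ∧ _}) ⟨_, w, rfl, hw, hprod⟩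

lemma wball_finite {S : Finset G} (hgen : Subgroup.closure (S : Set G) = ⊤) (a : G) (r : ℕ) :
    (wball (S : Set G) a r).Finite := by
  have hT : ((S : Set G) ∪ (S : Set G)⁻¹).Finite := S.finite_toSet.union S.finite_toSet.inv
  refine ((List.finite_setOf_length_le_of_forall_mem hT r).image fun w => a * w.prod).subset ?_
  intro x hx
  obtain ⟨w, hlen, hw, hprod⟩ := exists_list_length_eq_wordDist hgen a x
  exact ⟨w, ⟨hlen ▸ hx, fun y hy => (hw y hy).imp id Set.mem_inv.mpr⟩, by simp [hprod]⟩

lemma rBoundary_finite {S : Finset G} (hgen : Subgroup.closure (S : Set G) = ⊤) (r : ℕ)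
    (A : Finset G) : (rBoundary (S : Set G) r (A : Set G)).Finite := by
  refine (A.finite_toSet.biUnion fun a _ => wball_finite hgen a r).subset ?_
  rintro g ⟨-, a, ha, hd⟩
  exact Set.mem_biUnion ha hd

lemma rBoundary_mono (S : Set G) (A : Set G) : Monotone fun r => rBoundary S r A := by
  rintro r r' hr g ⟨hg, a, ha, hd⟩
  exact ⟨hg, a, ha, hd.trans hr⟩

lemma ncard_rBoundary_mono {S : Finset G} (hgen : Subgroup.closure (S : Set G) = ⊤)
    (A : Finset G) : Monotone fun r => (rBoundary (S : Set G) r (A : Set G)).ncard :=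
  fun _ _ hr => Set.ncard_le_ncard (rBoundary_mono _ _ hr) (rBoundary_finite hgen _ A)

end WordMetric

section WhyteFailure

variable {G : Type*} [Group G] {S : Finset G} {c : G → ℝ} {F : Finset G} {k : ℝ} {r R : ℕ}

lemma mul_ncard_rBoundary_lt_of_le (hgen : Subgroup.closure (S : Set G) = ⊤) (hk : 0 ≤ k)
    (hF : k * (rBoundary (S : Set G) R (F : Set G)).ncard < |∑ s ∈ F, c s|) (hr : r ≤ R) :
    k * (rBoundary (S : Set G) r (F : Set G)).ncard < |∑ s ∈ F, c s| :=
  (mul_le_mul_of_nonneg_left (by exact_mod_cast ncard_rBoundary_mono hgen F hr) hk).trans_lt hF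

lemma ncard_rBoundary_div_card_le {C : ℝ} (hC : ∀ g, |c g| ≤ C) (hk : 0 < k)
    (hF : k * (rBoundary (S : Set G) r (F : Set G)).ncard < |∑ s ∈ F, c s|) :
    ((rBoundary (S : Set G) r (F : Set G)).ncard : ℝ) / F.card ≤ C / k := by
  have hsum : |∑ s ∈ F, c s| ≤ F.card * C := by
    simpa using (Finset.abs_sum_le_sum_abs c F).trans (Finset.sum_le_sum fun s _ => hC s)
  have hsum_pos : 0 < |∑ s ∈ F, c s| := lt_of_le_of_lt (by positivity) hF
  have hcard_pos : (0 : ℝ) < F.card := by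
    exact_mod_cast (Finset.nonempty_of_sum_ne_zero (abs_pos.mp hsum_pos)).card_pos
  rw [div_le_div_iff₀ hcard_pos hk]
  nlinarith

lemma ncard_rBoundary_div_abs_sum_le (hk : 0 < k)
    (hF : k * (rBoundary (S : Set G) r (F : Set G)).ncard < |∑ s ∈ F, c s|) :
    ((rBoundary (S : Set G) r (F : Set G)).ncard : ℝ) / |∑ s ∈ F, c s| ≤ 1 / k := by
  rw [div_le_div_iff₀ (lt_of_le_of_lt (by positivity) hF) hk]
  linarith

end WhyteFailure

/-- If `c ∈ ℓ∞(G)` satisfies the negation of Whyte's boundedness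
condition, then there is a Følner sequence `(S'_n)` with
`|∂₁ S'_n| / |∑_{s ∈ S'_n} c(s)| → 0`; in particular `(S'_n)` is Følner while
`β_c` dominates `σ` along it. -/
theorem folner_from_whyte_failure {G : Type*} [Group G]
    (Sg : Finset G) (hgen : Subgroup.closure (Sg : Set G) = ⊤)
    (c : G → ℝ) (hc : ∃ C : ℝ, ∀ g, |c g| ≤ C)
    (hW : ∀ C r : ℕ, 0 < C → 0 < r → ∃ F : Finset G,
      (C : ℝ) * ((rBoundary (Sg : Set G) r (F : Set G)).ncard : ℝ) < |∑ s ∈ F, c s|) :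
    ∃ S' : ℕ → Finset G,
      IsFolner (Sg : Set G) S'
      ∧ (∀ n, 0 < |∑ s ∈ S' n, c s|)
      ∧ Filter.Tendsto
          (fun n => ((rBoundary (Sg : Set G) 1 (S' n : Set G)).ncard : ℝ) /
            |∑ s ∈ S' n, c s|)
          Filter.atTop (nhds 0) := by
  obtain ⟨C, hC⟩ := hc
  choose F hF using fun n : ℕ => hW (n + 1) (n + 1) n.succ_pos n.succ_pos
  have hk (n : ℕ) : (0 : ℝ) < (n + 1 : ℕ) := Nat.cast_pos.mpr n.succ_pos
  have hlim (K : ℝ) : Tendsto (fun n : ℕ => K / (n + 1 : ℕ)) atTop (𝓝 0) :=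
    (tendsto_const_div_atTop_nhds_zero_nat K).comp (tendsto_add_atTop_nat 1)
  have hsum_pos (n : ℕ) : 0 < |∑ s ∈ F n, c s| := lt_of_le_of_lt (by positivity) (hF n)
  refine ⟨F, ⟨fun n => Finset.nonempty_of_sum_ne_zero (abs_pos.mp (hsum_pos n)), fun r _ => ?_⟩,
    hsum_pos, ?_⟩
  · refine squeeze_zero' (Eventually.of_forall fun n => by positivity) ?_ (hlim C)
    filter_upwards [eventually_ge_atTop r] with n hn
    exact ncard_rBoundary_div_card_le hC (hk n)
      (mul_ncard_rBoundary_lt_of_le hgen (hk n).le (hF n) (hn.trans n.le_succ))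
  · exact squeeze_zero (fun n => by positivity)
      (fun n => ncard_rBoundary_div_abs_sum_le (hk n)
        (mul_ncard_rBoundary_lt_of_le hgen (hk n).le (hF n) n.succ_pos)) (hlim 1)
end

section
/- Let $G$ be a finitely generated amenable group with a bi-invariant mean, and let $H \le G$ be a subgroup of infinite index. Then for every $n \in \mathbb{N}_{\ge 1}$ there exist pairwise disjoint subsets $T^1, \dots, T^n \subseteq G$ such that each $T^k$ is left $H$-invariant ($hT^k = T^k$ for all $h \in H$) and each $T^k$ is left-thick: for every finite $F \subseteq G$ there exists $g \in G$ with $F g \subseteq T^k$. -/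
/-!
A finitely generated group is countable, so the pairs `(k, F)` with `k < n` and `F ⊆ G` finite can
be enumerated. As `H` has infinite index, Neumann's lemma lets one translate the sets `F` on the
right, one after the other, so that the images in `H\G` of all translates `F g_(k,F)` are pairwise
disjoint. Then `T k := ⋃_F H F g_(k,F)` works.
-/

open scoped Pointwise

namespace Subgroup

variable {G : Type*} [Group G] {H : Subgroup G}

theorem index_eq_zero_of_infinite_rightRel
    (hH : Infinite (Quotient (QuotientGroup.rightRel H))) : H.index = 0 :=
  index_eq_zero_iff_infinite.mpr <|
    (QuotientGroup.quotientRightRelEquivQuotientLeftRel H).infinite_iff.mp hH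

/-- If `b g s⁻¹ ∈ H` for some `b ∈ B`, `s ∈ S` and every `g`, then `G` is covered by the finitely
many left cosets `b⁻¹ s (s⁻¹ H s)`, which by B. H. Neumann's lemma forces `H` to have finite
index. -/
theorem exists_mul_mul_inv_notMem_of_index_eq_zero (hH : H.index = 0) (B S : Finset G) :
    ∃ g, ∀ b ∈ B, ∀ s ∈ S, b * g * s⁻¹ ∉ H := by
  classical
  by_contra! hcover
  have hcovers : ⋃ p ∈ B ×ˢ S,
      (p.1⁻¹ * p.2) • (H.comap (MulAut.conj p.2).toMonoidHom : Set G) = Set.univ := by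
    refine Set.eq_univ_of_forall fun g => ?_
    obtain ⟨b, hb, s, hs, hbgs⟩ := hcover g
    refine Set.mem_biUnion (x := (b, s)) (Finset.mem_product.mpr ⟨hb, hs⟩) ?_
    rw [Set.mem_smul_set_iff_inv_smul_mem, smul_eq_mul, SetLike.mem_coe, mem_comap]
    simpa [mul_assoc] using hbgs
  obtain ⟨p, -, hp⟩ := exists_finiteIndex_of_leftCoset_cover hcovers
  exact hp.index_ne_zero <| (index_comap_of_surjective H (MulAut.conj p.2).surjective).trans hH

theorem exists_seq_translates_separated (hH : H.index = 0) {D : ℕ → Finset G}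
    (hD : Monotone D) :
    ∃ g : ℕ → G, ∀ m n, m < n → ∀ a ∈ D m, ∀ b ∈ D n, b * g n * (a * g m)⁻¹ ∉ H := by
  classical
  -- Each term carries the index of the set it translates; that index may jump, hence `hD`.
  obtain ⟨f, -, hf⟩ := exists_seq_of_forall_finset_exists (fun _ : ℕ × G => True)
    (fun x y => x.1 < y.1 ∧ ∀ a ∈ D x.1, ∀ b ∈ D y.1, b * y.2 * (a * x.2)⁻¹ ∉ H)
    fun s _ => by
      obtain ⟨g, hg⟩ := exists_mul_mul_inv_notMem_of_index_eq_zero hH (D (s.sup Prod.fst + 1))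
        (s.biUnion fun x => (D x.1).image (· * x.2))
      refine ⟨(s.sup Prod.fst + 1, g), trivial, fun x hx =>
        ⟨Nat.lt_succ_of_le (Finset.le_sup hx), fun a ha b hb => hg b hb _ ?_⟩⟩
      exact Finset.mem_biUnion.mpr ⟨x, hx, Finset.mem_image_of_mem _ ha⟩
  have hindex : StrictMono fun n => (f n).1 := fun m n hmn => (hf m n hmn).1
  exact ⟨fun n => (f n).2, fun m n hmn a ha b hb =>
    (hf m n hmn).2 a (hD hindex.le_apply ha) b (hD hindex.le_apply hb)⟩

theorem exists_translates_pairwise_separated {ι : Type*} [Countable ι] (hH : H.index = 0)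
    (D : ι → Finset G) :
    ∃ g : ι → G, Pairwise fun i j => ∀ a ∈ D i, ∀ b ∈ D j, a * g i * (b * g j)⁻¹ ∉ H := by
  classical
  cases isEmpty_or_nonempty ι
  · exact ⟨isEmptyElim, fun i => isEmptyElim i⟩
  obtain ⟨e, he⟩ := exists_surjective_nat ι
  choose p hp using he
  set D' : ℕ → Finset G := fun n => (Finset.range (n + 1)).biUnion (D ∘ e)
  have hD' : Monotone D' := fun m n hmn =>
    Finset.biUnion_subset_biUnion_of_subset_left _ (Finset.range_subset_range.mpr (by omega))
  have hsub (i : ι) : D i ⊆ D' (p i) := by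
    simpa [hp i] using Finset.subset_biUnion_of_mem (D ∘ e) (Finset.self_mem_range_succ (p i))
  obtain ⟨g, hg⟩ := exists_seq_translates_separated hH hD'
  refine ⟨g ∘ p, fun i j hij a ha b hb => ?_⟩
  rcases lt_or_gt_of_ne (Function.LeftInverse.injective hp |>.ne hij) with hlt | hlt
  · exact fun h => hg _ _ hlt a (hsub i ha) b (hsub j hb) (by simpa using H.inv_mem h)
  · exact hg _ _ hlt b (hsub j hb) a (hsub i ha)

end Subgroup

theorem countable_of_closure_eq_top {G : Type*} [Group G] {S : Set G} [Countable S]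
    (hS : Subgroup.closure S = ⊤) : Countable G := by
  refine Function.Surjective.countable (f := FreeGroup.lift ((↑) : S → G)) ?_
  rw [← MonoidHom.range_eq_top, FreeGroup.range_lift_eq_closure, Subtype.range_coe, hS]

theorem disjoint_thick_invariant_sets_general {G : Type*} [Group G]
    (Sg : Finset G) (hgen : Subgroup.closure (Sg : Set G) = ⊤)
    (H : Subgroup G) (hH : Infinite (Quotient (QuotientGroup.rightRel H)))
    (n : ℕ) :
    ∃ T : Fin n → Set G,
      -- pairwise disjoint
      (∀ k j, k ≠ j → Disjoint (T k) (T j))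
      -- each left H-invariant
      ∧ (∀ k, ∀ h ∈ H, ∀ x : G, x ∈ T k ↔ h * x ∈ T k)
      -- each left-thick
      ∧ (∀ k, ∀ F : Set G, F.Finite → ∃ g : G, ∀ f ∈ F, f * g ∈ T k) := by
  have : Countable G := countable_of_closure_eq_top hgen
  obtain ⟨g, hg⟩ := Subgroup.exists_translates_pairwise_separated
    (Subgroup.index_eq_zero_of_infinite_rightRel hH) fun i : Fin n × Finset G => i.2
  refine ⟨fun k => {x | ∃ F : Finset G, ∃ f ∈ F, x * (f * g (k, F))⁻¹ ∈ H}, ?_, ?_, ?_⟩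
  · refine fun k k' hk => Set.disjoint_left.mpr ?_
    rintro x ⟨F, f, hf, hx⟩ ⟨F', f', hf', hx'⟩
    refine hg (i := (k, F)) (j := (k', F')) (fun h => hk (congrArg Prod.fst h)) f hf f' hf' ?_
    simpa [mul_assoc] using H.mul_mem (H.inv_mem hx) hx'
  · intro k h hh x
    simp only [Set.mem_ofPred_eq, mul_assoc, H.mul_mem_cancel_left hh]
  · intro k F hF
    refine ⟨g (k, hF.toFinset), fun f hf => ⟨hF.toFinset, f, hF.mem_toFinset.mpr hf, ?_⟩⟩
    simp

/-- Let `G` be a finitely generated amenable group (with a bi-invariant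
mean) and `H ≤ G` of infinite index. Then for every `n ≥ 1` there exist pairwise
disjoint, left `H`-invariant, left-thick subsets `T¹, …, Tⁿ ⊆ G`. -/
theorem disjoint_thick_invariant_sets {G : Type*} [Group G]
    (Sg : Finset G) (hgen : Subgroup.closure (Sg : Set G) = ⊤)
    (m : Mean G) (hml : m.LeftInvariant) (hmr : m.RightInvariant)
    (H : Subgroup G) (hH : Infinite (Quotient (QuotientGroup.rightRel H)))
    (n : ℕ) (hn : 1 ≤ n) :
    ∃ T : Fin n → Set G,
      -- pairwise disjoint
      (∀ k j, k ≠ j → Disjoint (T k) (T j))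
      -- each left H-invariant
      ∧ (∀ k, ∀ h ∈ H, ∀ x : G, x ∈ T k ↔ h * x ∈ T k)
      -- each left-thick
      ∧ (∀ k, ∀ F : Set G, F.Finite → ∃ g : G, ∀ f ∈ F, f * g ∈ T k) :=
  disjoint_thick_invariant_sets_general Sg hgen H hH n
end

section
/- Let $G$ be a finitely generated group with word metric, let $m_1, m_2$ be two right-invariant means on $\ell^\infty(G)$ and let $c \in \ell^\infty(G)$ with $m_1(c) \neq m_2(c)$. If $a \in \ell^\infty(G)$ is a uniformly finite boundary, i.e., there exists $b \in C_1^{uf}(G;\mathbb{R})$ with $\partial_1 b = a$, then $m_1(a) = m_2(a) = 0$; consequently $[c] \ne 0$ in $H_0^{uf}(G;\mathbb{R})$ and indeed $c$ is not a boundary. -/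
lemma wordDist_one {G : Type*} [Group G] (Sg : Set G) (g h : G) :
    wordDist Sg g h = wordDist Sg 1 (g⁻¹ * h) := by
  simp [wordDist]

lemma ball_finite {G : Type*} [Group G] (Sg : Finset G)
    (hgen : Subgroup.closure (Sg : Set G) = ⊤) (R : ℕ) :
    {h : G | wordDist (Sg : Set G) 1 h ≤ R}.Finite := by
  set T : Set G := (Sg : Set G) ∪ ((Sg : Set G))⁻¹ with hT
  have hTfin : T.Finite := Sg.finite_toSet.union (Sg.finite_toSet.inv)
  haveI := hTfin.to_subtype
  have hsub : {h : G | wordDist (Sg : Set G) 1 h ≤ R} ⊆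
      (fun l : List T => (l.map Subtype.val).prod) '' {l | l.length ≤ R} := by
    intro h hh
    have hmem : h ∈ Subgroup.closure (Sg : Set G) := hgen ▸ Subgroup.mem_top h
    have hmem' : h ∈ Submonoid.closure T := by
      rw [hT, ← Subgroup.closure_toSubmonoid]; exact hmem
    obtain ⟨w0, hw0T, hw0p⟩ := Submonoid.exists_list_of_mem_closure hmem'
    have hne : {n | ∃ w : List G, w.length = n ∧
        (∀ x ∈ w, x ∈ (Sg : Set G) ∨ x⁻¹ ∈ (Sg : Set G)) ∧ w.prod = (1:G)⁻¹ * h}.Nonempty := by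
      refine ⟨w0.length, w0, rfl, ?_, by simpa using hw0p⟩
      intro x hx
      rcases hw0T x hx with h1 | h1
      · exact Or.inl h1
      · exact Or.inr (by simpa using h1)
    have hsinf := Nat.sInf_mem hne
    obtain ⟨w, hwl, hwT, hwp⟩ := hsinf
    have hwT' : ∀ x ∈ w, x ∈ T := by
      intro x hx
      rcases hwT x hx with h1 | h1
      · exact Or.inl h1
      · exact Or.inr (by simpa using h1)
    refine ⟨w.attach.map (fun x => (⟨x.1, hwT' x.1 x.2⟩ : T)), ?_, ?_⟩
    · simp only [Set.mem_setOf_eq, List.length_map, List.length_attach]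
      rw [hwl]; exact hh
    · simp only [List.map_map]
      have : (w.attach.map (Subtype.val ∘ fun x : {x // x ∈ w} =>
          (⟨x.1, hwT' x.1 x.2⟩ : T))) = w := by
        simpa using List.attach_map_subtype_val w
      rw [this]
      simpa using hwp
  exact Set.Finite.subset ((List.finite_length_le T R).image _) hsub

lemma mean_kills_boundary {G : Type*} [Group G] (Sg : Finset G)
    (hgen : Subgroup.closure (Sg : Set G) = ⊤)
    (m : Mean G) (hm : m.RightInvariant) (a : Linf G)
    (ha : IsUFBoundary (Sg : Set G) (a : G → ℝ)) : m.toFun a = 0 := by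
  classical
  obtain ⟨b, ⟨C, hC⟩, ⟨R, hR⟩, hb⟩ := ha
  set F : Finset G := (ball_finite Sg hgen R).toFinset with hF
  have hFmem : ∀ h : G, h ∈ F ↔ wordDist (Sg : Set G) 1 h ≤ R := by
    intro h; simp [hF]
  set φ : G → Linf G := fun h => ⟨fun x => b (x, x * h), C, fun x => hC _⟩ with hφ
  have key : a = ∑ h ∈ F, (rT h⁻¹ (φ h) - φ h) := by
    apply Subtype.ext
    funext x
    have hcoe : ((∑ h ∈ F, (rT h⁻¹ (φ h) - φ h) : Linf G) : G → ℝ) x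
        = ∑ h ∈ F, (b (x * h⁻¹, x) - b (x, x * h)) := by
      rw [AddSubmonoidClass.coe_finset_sum]
      rw [Finset.sum_apply]
      refine Finset.sum_congr rfl (fun h _ => ?_)
      simp [rT, hφ, inv_mul_cancel_right]
    have h1 : (∑ᶠ y, b (y, x)) = ∑ h ∈ F, b (x * h⁻¹, x) := by
      have hsupp : (Function.support fun y => b (y, x)) ⊆
          ↑(F.image (fun h => x * h⁻¹)) := by
        intro y hy
        simp only [Function.mem_support] at hy
        have hd : wordDist (Sg : Set G) y x ≤ R := by
          by_contra hcon
          exact hy (hR (y, x) (lt_of_not_ge hcon))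
        have hmem : y⁻¹ * x ∈ F := by
          rw [hFmem]
          rw [wordDist_one] at hd
          exact hd
        simp only [Finset.coe_image, Set.mem_image, Finset.mem_coe]
        exact ⟨y⁻¹ * x, hmem, by group⟩
      have hinj : ∀ h₁ ∈ F, ∀ h₂ ∈ F, x * h₁⁻¹ = x * h₂⁻¹ → h₁ = h₂ := by
        intro h₁ _ h₂ _ e
        exact inv_injective (mul_left_cancel e)
      rw [finsum_eq_finset_sum_of_support_subset _ hsupp, Finset.sum_image hinj]
    have h2 : (∑ᶠ y, b (x, y)) = ∑ h ∈ F, b (x, x * h) := by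
      have hsupp : (Function.support fun y => b (x, y)) ⊆
          ↑(F.image (fun h => x * h)) := by
        intro y hy
        simp only [Function.mem_support] at hy
        have hd : wordDist (Sg : Set G) x y ≤ R := by
          by_contra hcon
          exact hy (hR (x, y) (lt_of_not_ge hcon))
        have hmem : x⁻¹ * y ∈ F := by
          rw [hFmem]
          rw [wordDist_one] at hd
          exact hd
        simp only [Finset.coe_image, Set.mem_image, Finset.mem_coe]
        exact ⟨x⁻¹ * y, hmem, by group⟩
      have hinj : ∀ h₁ ∈ F, ∀ h₂ ∈ F, x * h₁ = x * h₂ → h₁ = h₂ := by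
        intro h₁ _ h₂ _ e
        exact mul_left_cancel e
      rw [finsum_eq_finset_sum_of_support_subset _ hsupp, Finset.sum_image hinj]
    rw [hcoe, hb x, h1, h2, ← Finset.sum_sub_distrib]
  rw [key, map_sum]
  refine Finset.sum_eq_zero (fun h _ => ?_)
  rw [map_sub, hm h⁻¹ (φ h), sub_self]

/-- Let `G` be a finitely generated group and `m₁, m₂` two
right-invariant means with `m₁(c) ≠ m₂(c)`. Then every uniformly finite boundary `a`
satisfies `m₁(a) = m₂(a) = 0`; consequently `c` is not a uniformly finite boundary,
i.e. `[c] ≠ 0` in `H₀^{uf}(G;ℝ)`. -/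
theorem means_kill_boundaries {G : Type*} [Group G]
    (Sg : Finset G) (hgen : Subgroup.closure (Sg : Set G) = ⊤)
    (m₁ m₂ : Mean G) (hm₁ : m₁.RightInvariant) (hm₂ : m₂.RightInvariant)
    (c : Linf G) (hc : m₁.toFun c ≠ m₂.toFun c) :
    (∀ a : Linf G, IsUFBoundary (Sg : Set G) (a : G → ℝ) →
        m₁.toFun a = 0 ∧ m₂.toFun a = 0)
    ∧ ¬ IsUFBoundary (Sg : Set G) (c : G → ℝ) := by
  have main : ∀ a : Linf G, IsUFBoundary (Sg : Set G) (a : G → ℝ) →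
      m₁.toFun a = 0 ∧ m₂.toFun a = 0 := fun a ha =>
    ⟨mean_kills_boundary Sg hgen m₁ hm₁ a ha, mean_kills_boundary Sg hgen m₂ hm₂ a ha⟩
  refine ⟨main, fun hcb => ?_⟩
  obtain ⟨h1, h2⟩ := main c hcb
  exact hc (h1.trans h2.symm)
end
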